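/- Assume p01 ≤ p11 and β ∈ [0,1]. Let g : [0,1]^n → ℝ be affine in each coordinate and satisfy both: (A) 1 + g(ω_2,…,ω_n,ω_1) ≥ g(ω_1,…,ω_n) for all 0 ≤ ω_1 ≤ ⋯ ≤ ω_n ≤ 1, and (B) g(ω_1,…,ω_j, y, x, ω_{j+3},…,ω_n) ≥ g(ω_1,…,ω_j, x, y, ω_{j+3},…,ω_n) for all 0 ≤ ω_1 ≤ ⋯ ≤ ω_n ≤ 1, all 0 ≤ j ≤ n−2, and all x ≥ y in [0,1]. Define f : [0,1]^n → ℝ by f(ω_1,…,ω_n) = Σ_{i=n−k+1}^n ω_i + β · Σ_{l ∈ {0,1}^k} q(l; (ω_{n−k+1},…,ω_n)) · g(v_l), where v_l consists of (k−|l|) copies of p01, then τ(ω_1),…,τ(ω_{n−k}), then |l| copies of p11. Then f satisfies (A): 1 + f(ω_2,…,ω_n,ω_1) ≥ f(ω_1,…,ω_n) for all 0 ≤ ω_1 ≤ ⋯ ≤ ω_n ≤ 1. -/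

import Mathlib

open Finset

noncomputable section

/-- The one-step belief update for an unobserved channel. -/
def tauF (p01 p11 : ℝ) (w : ℝ) : ℝ := w * p11 + (1 - w) * p01

/-- The set of admissible actions: subsets of `Fin n` of cardinality `k`. -/
def actions (n k : ℕ) : Finset (Finset (Fin n)) :=
  (Finset.univ : Finset (Fin n)).powersetCard k

lemma actions_nonempty {n k : ℕ} (hk : k ≤ n) : (actions n k).Nonempty := by
  rw [actions, Finset.powersetCard_nonempty, Finset.card_univ, Fintype.card_fin]
  exact hk

/-- Number of `true` entries in a `{0,1}^k` realization. -/
def countTrue {k : ℕ} (l : Fin k → Bool) : ℕ :=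
  (Finset.univ.filter fun i => l i = true).card

/-- `q(l; u) = ∏ u_i^{l_i} (1-u_i)^{1-l_i}`. -/
def qProb {k : ℕ} (u : Fin k → ℝ) (l : Fin k → Bool) : ℝ :=
  ∏ i : Fin k, if l i then u i else 1 - u i

/-- The top `k` coordinates `(ω_{n-k+1}, …, ω_n)` of a length-`n` vector. -/
def topCoords {n k : ℕ} (hk : k ≤ n) (ω : Fin n → ℝ) : Fin k → ℝ :=
  fun i => ω ⟨n - k + i.val, by omega⟩

/-- The vector `v_l`: `k - m` copies of `p01`, then `τ(ω_1),…,τ(ω_{n-k})`,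
then `m` copies of `p11`, where `m` is the number of ones in `l`. -/
def vl {n : ℕ} (k : ℕ) (p01 p11 : ℝ) (ω : Fin n → ℝ) (m : ℕ) : Fin n → ℝ :=
  fun j =>
    if j.val < k - m then p01
    else if j.val < n - m then tauF p01 p11 (ω ⟨j.val - (k - m), by omega⟩)
    else p11

/-- The greedy-policy value functions `W`, indexed by the number of remaining
steps (`r = 0` corresponds to the terminal time `T`). -/
def Wval (n k : ℕ) (hk : k ≤ n) (p01 p11 β : ℝ) : ℕ → (Fin n → ℝ) → ℝ
  | 0, ω => ∑ i : Fin n, if n - k ≤ i.val then ω i else 0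
  | r + 1, ω =>
      (∑ i : Fin n, if n - k ≤ i.val then ω i else 0) +
        β * ∑ l : Fin k → Bool,
          qProb (topCoords hk ω) l *
            Wval n k hk p01 p11 β r (vl k p01 p11 ω (countTrue l))

/-- The updated information state `ω^{a,s}`. -/
def nextState {n : ℕ} (p01 p11 : ℝ) (ω : Fin n → ℝ) (a : Finset (Fin n))
    (s : {i // i ∈ a} → Bool) : Fin n → ℝ :=
  fun j => if h : j ∈ a then (if s ⟨j, h⟩ then p11 else p01) else tauF p01 p11 (ω j)

/-- The probability of the realization `s` of the selected channels `a`. -/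
def obsProb {n : ℕ} (ω : Fin n → ℝ) (a : Finset (Fin n))
    (s : {i // i ∈ a} → Bool) : ℝ :=
  ∏ i : {i // i ∈ a}, if s i then ω i.val else 1 - ω i.val

/-- The optimal value functions `V`, indexed by the number of remaining steps. -/
def Vval (n k : ℕ) (hk : k ≤ n) (p01 p11 β : ℝ) : ℕ → (Fin n → ℝ) → ℝ
  | 0, ω => (actions n k).sup' (actions_nonempty hk) fun a => ∑ i ∈ a, ω i
  | r + 1, ω =>
      (actions n k).sup' (actions_nonempty hk) fun a =>
        (∑ i ∈ a, ω i) +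
          β * ∑ s : {i // i ∈ a} → Bool,
            obsProb ω a s * Vval n k hk p01 p11 β r (nextState p01 p11 ω a s)

/-- `Q_t(ω, a)`: the value of taking action `a` now and acting optimally
afterwards, indexed by the number of remaining steps. -/
def Qval (n k : ℕ) (hk : k ≤ n) (p01 p11 β : ℝ) : ℕ → (Fin n → ℝ) → Finset (Fin n) → ℝ
  | 0, ω, a => ∑ i ∈ a, ω i
  | r + 1, ω, a =>
      (∑ i ∈ a, ω i) +
        β * ∑ s : {i // i ∈ a} → Bool,
          obsProb ω a s * Vval n k hk p01 p11 β r (nextState p01 p11 ω a s)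

/-- Replace the coordinates in positions `j` and `j+1` (`0`-indexed) by `x` and `y`. -/
def upd2 {n : ℕ} (ω : Fin n → ℝ) (j : ℕ) (hj : j + 1 < n) (x y : ℝ) : Fin n → ℝ :=
  Function.update (Function.update ω ⟨j, by omega⟩ x) ⟨j + 1, hj⟩ y

/-- The cyclic shift `(ω_2, …, ω_n, ω_1)`. -/
def cyc {n : ℕ} (hn : 0 < n) (ω : Fin n → ℝ) : Fin n → ℝ :=
  fun j => ω ⟨(j.val + 1) % n, Nat.mod_lt _ hn⟩

end

/-! Split the realization `l` at the channel that leaves the top `k`: for `f ω` this is the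
first top channel `ω_{n-k+1}`, for `f (cyc ω)` it is `ω_1`, which moved to the last position.
The remaining `k - 1` channels are the same on both sides, so both values are averages over the
same realizations and it suffices to compare them realization by realization.

For a fixed number `m` of ones among those, let `dA` (resp. `dB`) be the sorted vector built
from `τ(ω_1), …, τ(ω_{n-k})` (resp. `τ(ω_2), …, τ(ω_{n-k+1})`). Each of the four vectors `v_l`
involved is `dA` or `dB` with one entry `p01` or `p11` inserted, and inserting `τ(ω_{n-k+1})`
into `dA` or `τ(ω_1)` into `dB` gives the same vector `S`. Property (B) makes `g` grow as the
inserted entry moves towards its sorted place, (A) bounds by `1` the cost of moving it from the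
front to the back, and affinity of `g` in the inserted entry writes `g S` in terms of both
sides. -/

open Set

lemma tauF_mem_Icc {p01 p11 w : ℝ} (hord : p01 ≤ p11) (hw : w ∈ Icc (0:ℝ) 1) :
    tauF p01 p11 w ∈ Icc p01 p11 := by
  obtain ⟨hw0, hw1⟩ := hw
  constructor <;> simp only [tauF] <;> nlinarith

lemma tauF_mono {p01 p11 : ℝ} (hord : p01 ≤ p11) : Monotone (tauF p01 p11) := by
  intro a b hab
  simp only [tauF]
  nlinarith

section vl

variable {n k m : ℕ} {p01 p11 : ℝ}

lemma vl_mem_Icc (hord : p01 ≤ p11) {ω : Fin n → ℝ} (hω : ∀ i, ω i ∈ Icc (0:ℝ) 1)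
    (j : Fin n) : vl k p01 p11 ω m j ∈ Icc p01 p11 := by
  simp only [vl]
  split_ifs
  · exact ⟨le_rfl, hord⟩
  · exact tauF_mem_Icc hord (hω _)
  · exact ⟨hord, le_rfl⟩

lemma vl_monotone (hord : p01 ≤ p11) {ω : Fin n → ℝ} (hω : Monotone ω)
    (hω01 : ∀ i, ω i ∈ Icc (0:ℝ) 1) : Monotone (vl k p01 p11 ω m) := by
  intro a b hab
  have hab' : a.val ≤ b.val := hab
  simp only [vl]
  split_ifs
  all_goals first
    | omega
    | exact le_rfl
    | exact hord
    | exact (tauF_mem_Icc hord (hω01 _)).1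
    | exact (tauF_mem_Icc hord (hω01 _)).2
    | exact tauF_mono hord (hω (Fin.mk_le_mk.2 (by omega)))

end vl

section vlInsert

variable {n k m : ℕ} {p01 p11 : ℝ} (ω : Fin (n + 1) → ℝ)

lemma vl_succ_eq_insertNth (hm : m ≤ k) (hk : k ≤ n) :
    vl (k + 1) p01 p11 ω m
      = Fin.insertNth ⟨k - m, by omega⟩ p01 (vl k p01 p11 (ω ∘ Fin.castSucc) m) := by
  rw [eq_comm, Fin.insertNth_eq_iff]
  refine ⟨by simp [vl]; omega, funext fun t => ?_⟩
  simp only [vl, Fin.removeNth, Fin.succAbove, Fin.lt_def, apply_ite Fin.val, Fin.val_castSucc,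
    Fin.val_succ, Function.comp_apply]
  split_ifs <;> first | rfl | omega | (congr 2; ext; simp only [Fin.val_castSucc]; omega)

lemma vl_succ_succ_eq_insertNth (hm : m ≤ k) (hk : k ≤ n) :
    vl (k + 1) p01 p11 ω (m + 1)
      = Fin.insertNth ⟨n - m, by omega⟩ p11 (vl k p01 p11 (ω ∘ Fin.castSucc) m) := by
  rw [eq_comm, Fin.insertNth_eq_iff]
  refine ⟨by simp [vl]; omega, funext fun t => ?_⟩
  simp only [vl, Fin.removeNth, Fin.succAbove, Fin.lt_def, apply_ite Fin.val, Fin.val_castSucc,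
    Fin.val_succ, Function.comp_apply]
  split_ifs <;> first | rfl | omega | (congr 2; ext; simp only [Fin.val_castSucc]; omega)

lemma vl_eq_insertNth_last (hm : m ≤ k) (hk : k ≤ n) :
    vl k p01 p11 ω m
      = Fin.insertNth ⟨n - m, by omega⟩ (tauF p01 p11 (ω ⟨n - k, by omega⟩))
          (vl k p01 p11 (ω ∘ Fin.castSucc) m) := by
  rw [eq_comm, Fin.insertNth_eq_iff]
  refine ⟨?_, funext fun t => ?_⟩
  · simp only [vl]
    rw [if_neg (by omega), if_pos (by omega)]
    congr 2
    ext
    simp only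
    omega
  simp only [vl, Fin.removeNth, Fin.succAbove, Fin.lt_def, apply_ite Fin.val, Fin.val_castSucc,
    Fin.val_succ, Function.comp_apply]
  split_ifs <;> first | rfl | omega

lemma vl_eq_insertNth_first (hm : m ≤ k) (hk : k ≤ n) :
    vl k p01 p11 ω m = Fin.insertNth ⟨k - m, by omega⟩ (tauF p01 p11 (ω 0))
      (vl k p01 p11 (ω ∘ Fin.succ) m) := by
  rw [eq_comm, Fin.insertNth_eq_iff]
  refine ⟨?_, funext fun t => ?_⟩
  · simp only [vl]
    rw [if_neg (by omega), if_pos (by omega)]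
    congr 2
    ext
    simp
  simp only [vl, Fin.removeNth, Fin.succAbove, Fin.lt_def, apply_ite Fin.val, Fin.val_castSucc,
    Fin.val_succ, Function.comp_apply]
  split_ifs <;> first | rfl | omega | (congr 2; ext; simp only [Fin.val_succ]; omega)

end vlInsert

lemma monotone_fin_cons {n : ℕ} {α : Type*} [Preorder α] {a : α} {v : Fin n → α}
    (hv : Monotone v) (ha : ∀ j, a ≤ v j) : Monotone (Fin.cons a v : Fin (n + 1) → α) := by
  intro i j hij
  induction i using Fin.cases with
  | zero => induction j using Fin.cases with
    | zero => exact le_rfl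
    | succ t => exact ha t
  | succ s => induction j using Fin.cases with
    | zero => exact absurd hij (by simp)
    | succ t => exact hv (Fin.succ_le_succ_iff.1 hij)

lemma cyc_eq_snoc {n : ℕ} (ω : Fin (n + 1) → ℝ) :
    cyc n.succ_pos ω = Fin.snoc (Fin.tail ω) (ω 0) := by
  ext j
  refine Fin.lastCases ?_ (fun t => ?_) j
  · simp [cyc]
  · simp only [cyc, Fin.snoc_castSucc, Fin.tail, Fin.val_castSucc]
    congr 1
    ext
    simp [Nat.mod_eq_of_lt (Nat.succ_lt_succ t.isLt)]

lemma cyc_comp_castSucc {n : ℕ} (ω : Fin (n + 1) → ℝ) :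
    cyc n.succ_pos ω ∘ Fin.castSucc = ω ∘ Fin.succ := by
  rw [cyc_eq_snoc]
  exact Fin.init_snoc _ _

def AffineInEachCoord {n : ℕ} (g : (Fin n → ℝ) → ℝ) : Prop :=
  ∀ ω : Fin n → ℝ, (∀ j, ω j ∈ Icc (0:ℝ) 1) → ∀ i : Fin n, ∀ x ∈ Icc (0:ℝ) 1,
    g (Function.update ω i x) = (1 - x) * g (Function.update ω i 0) + x * g (Function.update ω i 1)

/-- Property (A) of Lemma 3. -/
def CyclicShiftBound {n : ℕ} (g : (Fin (n + 1) → ℝ) → ℝ) : Prop :=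
  ∀ ω : Fin (n + 1) → ℝ, Monotone ω → (∀ i, ω i ∈ Icc (0:ℝ) 1) → 1 + g (cyc n.succ_pos ω) ≥ g ω

/-- Property (B) of Lemma 3. -/
def AdjacentSortMono {n : ℕ} (g : (Fin n → ℝ) → ℝ) : Prop :=
  ∀ ω : Fin n → ℝ, Monotone ω → (∀ i, ω i ∈ Icc (0:ℝ) 1) →
    ∀ (j : ℕ) (hj : j + 1 < n), ∀ x y : ℝ, x ∈ Icc (0:ℝ) 1 → y ∈ Icc (0:ℝ) 1 → y ≤ x →
      g (upd2 ω j hj y x) ≥ g (upd2 ω j hj x y)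

section insertNth

lemma upd2_predAbove_eq_insertNth_succ {n : ℕ} (d : Fin n → ℝ) (i : Fin n) (c : ℝ) :
    upd2 (d ∘ i.predAbove) i (by omega) (d i) c = Fin.insertNth i.succ c d := by
  ext j
  rcases Fin.eq_self_or_eq_succAbove i.succ j with rfl | ⟨t, rfl⟩
  · simp [upd2, Function.update_apply, Fin.ext_iff]
  · rw [Fin.insertNth_apply_succAbove]
    simp only [upd2, Function.update_apply, Function.comp_apply, Fin.succAbove, Fin.predAbove,
      Fin.ext_iff, Fin.lt_def, apply_ite Fin.val, Fin.val_succ, Fin.val_castSucc]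
    split_ifs <;> first | omega | rfl | (congr 1; ext; omega)

lemma upd2_predAbove_eq_insertNth_castSucc {n : ℕ} (d : Fin n → ℝ) (i : Fin n) (c : ℝ) :
    upd2 (d ∘ i.predAbove) i (by omega) c (d i) = Fin.insertNth i.castSucc c d := by
  ext j
  rcases Fin.eq_self_or_eq_succAbove i.castSucc j with rfl | ⟨t, rfl⟩
  · simp [upd2, Function.update_apply, Fin.ext_iff]
  · rw [Fin.insertNth_apply_succAbove]
    simp only [upd2, Function.update_apply, Function.comp_apply, Fin.succAbove, Fin.predAbove,
      Fin.ext_iff, Fin.lt_def, apply_ite Fin.val, Fin.val_succ, Fin.val_castSucc]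
    split_ifs <;> first | omega | rfl | (congr 1; ext; omega)

variable {n : ℕ} {g : (Fin (n + 1) → ℝ) → ℝ} {d : Fin n → ℝ} {c : ℝ}

-- `d ∘ i.predAbove` repeats `d i`: it is sorted and agrees with both insertions off `{i, i+1}`.
lemma AdjacentSortMono.insertNth_succ_le (hB : AdjacentSortMono g) (hd : Monotone d)
    (hd01 : ∀ j, d j ∈ Icc (0:ℝ) 1) (hc01 : c ∈ Icc (0:ℝ) 1) (i : Fin n)
    (hc : c ≤ d i) :
    g (Fin.insertNth i.succ c d) ≤ g (Fin.insertNth i.castSucc c d) := by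
  have := hB (d ∘ i.predAbove) (hd.comp (Fin.predAbove_right_monotone i)) (fun j => hd01 _) i
    (by omega) (d i) c (hd01 i) hc01 hc
  rwa [upd2_predAbove_eq_insertNth_succ, upd2_predAbove_eq_insertNth_castSucc] at this

lemma AdjacentSortMono.insertNth_castSucc_le (hB : AdjacentSortMono g) (hd : Monotone d)
    (hd01 : ∀ j, d j ∈ Icc (0:ℝ) 1) (hc01 : c ∈ Icc (0:ℝ) 1) (i : Fin n)
    (hc : d i ≤ c) :
    g (Fin.insertNth i.castSucc c d) ≤ g (Fin.insertNth i.succ c d) := by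
  have := hB (d ∘ i.predAbove) (hd.comp (Fin.predAbove_right_monotone i)) (fun j => hd01 _) i
    (by omega) c (d i) hc01 (hd01 i) hc
  rwa [upd2_predAbove_eq_insertNth_succ, upd2_predAbove_eq_insertNth_castSucc] at this

lemma AdjacentSortMono.antitone_insertNth (hB : AdjacentSortMono g) (hd : Monotone d)
    (hd01 : ∀ j, d j ∈ Icc (0:ℝ) 1) (hc01 : c ∈ Icc (0:ℝ) 1) (hc : ∀ j, c ≤ d j) :
    Antitone fun i => g (Fin.insertNth i c d) :=
  Fin.antitone_iff_succ_le.2 fun i => hB.insertNth_succ_le hd hd01 hc01 i (hc i)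

lemma AdjacentSortMono.monotone_insertNth (hB : AdjacentSortMono g) (hd : Monotone d)
    (hd01 : ∀ j, d j ∈ Icc (0:ℝ) 1) (hc01 : c ∈ Icc (0:ℝ) 1) (hc : ∀ j, d j ≤ c) :
    Monotone fun i => g (Fin.insertNth i c d) :=
  Fin.monotone_iff_le_succ.2 fun i => hB.insertNth_castSucc_le hd hd01 hc01 i (hc i)

lemma AdjacentSortMono.insertNth_le_one_add (hB : AdjacentSortMono g)
    (hA : CyclicShiftBound g)
    (hd : Monotone d) (hd01 : ∀ j, d j ∈ Icc (0:ℝ) 1) (hc01 : c ∈ Icc (0:ℝ) 1)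
    (hc : ∀ j, c ≤ d j) (i j : Fin (n + 1)) :
    g (Fin.insertNth i c d) ≤ 1 + g (Fin.insertNth j c d) := by
  have hanti := hB.antitone_insertNth hd hd01 hc01 hc
  have hcycle : g (Fin.cons c d) ≤ 1 + g (Fin.snoc d c) := by
    have := hA (Fin.cons c d) (monotone_fin_cons hd hc) (Fin.cases hc01 hd01)
    rwa [cyc_eq_snoc, Fin.cons_zero, Fin.tail_cons] at this
  calc g (Fin.insertNth i c d) ≤ g (Fin.insertNth 0 c d) := hanti (Fin.zero_le i)
    _ ≤ 1 + g (Fin.insertNth (Fin.last n) c d) := by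
      rwa [Fin.insertNth_zero', Fin.insertNth_last']
    _ ≤ 1 + g (Fin.insertNth j c d) := by gcongr; exact hanti (Fin.le_last j)

end insertNth

lemma insertNth_tauF_of_affine {n : ℕ} {g : (Fin (n + 1) → ℝ) → ℝ}
    (haffine : AffineInEachCoord g)
    {d : Fin n → ℝ} (hd01 : ∀ j, d j ∈ Icc (0:ℝ) 1) {p01 p11 z : ℝ}
    (hp01 : p01 ∈ Icc (0:ℝ) 1) (hp11 : p11 ∈ Icc (0:ℝ) 1) (hord : p01 ≤ p11)
    (hz : z ∈ Icc (0:ℝ) 1) (i : Fin (n + 1)) :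
    g (Fin.insertNth i (tauF p01 p11 z) d)
      = (1 - z) * g (Fin.insertNth i p01 d) + z * g (Fin.insertNth i p11 d) := by
  have hline : ∀ x ∈ Icc (0:ℝ) 1, g (Fin.insertNth i x d)
      = (1 - x) * g (Fin.insertNth i 0 d) + x * g (Fin.insertNth i 1 d) := by
    intro x hx
    have hbase : ∀ j, (Fin.insertNth i 0 d : Fin (n + 1) → ℝ) j ∈ Icc (0:ℝ) 1 := by
      intro j
      rcases Fin.eq_self_or_eq_succAbove i j with rfl | ⟨t, rfl⟩ <;> simp [hd01]
    simpa only [Fin.update_insertNth] using haffine _ hbase i x hx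
  have hτ : tauF p01 p11 z ∈ Icc (0:ℝ) 1 :=
    Icc_subset_Icc hp01.1 hp11.2 (tauF_mem_Icc hord hz)
  rw [hline _ hτ, hline _ hp01, hline _ hp11, tauF]
  ring

lemma payoff_le_one_add_payoff {β w z A0 A1 Ap B0 B1 Bs S : ℝ} (hβ : β ∈ Icc (0:ℝ) 1)
    (hw : w ∈ Icc (0:ℝ) 1) (hz : 0 ≤ z) (hA0 : A0 ≤ 1 + Ap)
    (hSA : S = (1 - w) * Ap + w * A1) (hSB : S = (1 - z) * B0 + z * Bs) (hB1 : Bs ≤ B1) :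
    w + β * (w * A1 + (1 - w) * A0) ≤ 1 + (z + β * (z * B1 + (1 - z) * B0)) := by
  obtain ⟨hβ0, hβ1⟩ := hβ
  obtain ⟨hw0, hw1⟩ := hw
  calc w + β * (w * A1 + (1 - w) * A0) ≤ w + β * (w * A1 + (1 - w) * (1 + Ap)) := by gcongr
    _ = w + β * S + β * (1 - w) := by rw [hSA]; ring
    _ ≤ 1 + β * S := by nlinarith
    _ ≤ 1 + β * ((1 - z) * B0 + z * B1) := by rw [hSB]; gcongr
    _ ≤ 1 + (z + β * (z * B1 + (1 - z) * B0)) := by linarith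

lemma step_le_one_add_step_cyc {n k m : ℕ} (hm : m ≤ k) (hk : k ≤ n) {p01 p11 β : ℝ}
    (hp01 : p01 ∈ Icc (0:ℝ) 1) (hp11 : p11 ∈ Icc (0:ℝ) 1) (hβ : β ∈ Icc (0:ℝ) 1)
    (hord : p01 ≤ p11) {g : (Fin (n + 1) → ℝ) → ℝ}
    (haffine : AffineInEachCoord g)
    (hA : CyclicShiftBound g)
    (hB : AdjacentSortMono g) {ω : Fin (n + 1) → ℝ} (hω : Monotone ω)
    (hω01 : ∀ i, ω i ∈ Icc (0:ℝ) 1) :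
    let w := ω ⟨n - k, by omega⟩
    let z := ω 0
    w + β * (w * g (vl (k + 1) p01 p11 ω (m + 1)) + (1 - w) * g (vl (k + 1) p01 p11 ω m))
      ≤ 1 + (z + β * (z * g (vl (k + 1) p01 p11 (cyc n.succ_pos ω) (m + 1))
        + (1 - z) * g (vl (k + 1) p01 p11 (cyc n.succ_pos ω) m))) := by
  intro w z
  set dA := vl k p01 p11 (ω ∘ Fin.castSucc) m
  set dB := vl k p01 p11 (ω ∘ Fin.succ) m
  have hω01A : ∀ i, (ω ∘ Fin.castSucc) i ∈ Icc (0:ℝ) 1 := fun _ => hω01 _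
  have hω01B : ∀ i, (ω ∘ Fin.succ) i ∈ Icc (0:ℝ) 1 := fun _ => hω01 _
  have hdA : Monotone dA := vl_monotone hord (hω.comp Fin.strictMono_castSucc.monotone) hω01A
  have hdB : Monotone dB := vl_monotone hord (hω.comp Fin.strictMono_succ.monotone) hω01B
  have hdA01 : ∀ j, dA j ∈ Icc (0:ℝ) 1 :=
    fun j => Icc_subset_Icc hp01.1 hp11.2 (vl_mem_Icc hord hω01A j)
  have hdB01 : ∀ j, dB j ∈ Icc (0:ℝ) 1 :=
    fun j => Icc_subset_Icc hp01.1 hp11.2 (vl_mem_Icc hord hω01B j)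
  set a : Fin (n + 1) := ⟨k - m, by omega⟩
  set b : Fin (n + 1) := ⟨n - m, by omega⟩
  have hab : a ≤ b := Fin.mk_le_mk.2 (by omega)
  rw [vl_succ_eq_insertNth ω hm hk, vl_succ_succ_eq_insertNth ω hm hk,
    vl_succ_eq_insertNth _ hm hk, vl_succ_succ_eq_insertNth _ hm hk, cyc_comp_castSucc]
  have hSA : g (vl k p01 p11 ω m)
      = (1 - w) * g (Fin.insertNth b p01 dA) + w * g (Fin.insertNth b p11 dA) := by
    rw [vl_eq_insertNth_last ω hm hk,
      insertNth_tauF_of_affine haffine hdA01 hp01 hp11 hord (hω01 _)]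
  have hSB : g (vl k p01 p11 ω m)
      = (1 - z) * g (Fin.insertNth a p01 dB) + z * g (Fin.insertNth a p11 dB) := by
    rw [vl_eq_insertNth_first ω hm hk,
      insertNth_tauF_of_affine haffine hdB01 hp01 hp11 hord (hω01 _)]
  have hA0 : g (Fin.insertNth a p01 dA) ≤ 1 + g (Fin.insertNth b p01 dA) :=
    hB.insertNth_le_one_add hA hdA hdA01 hp01 (fun j => (vl_mem_Icc hord hω01A j).1) a b
  have hB1 : g (Fin.insertNth a p11 dB) ≤ g (Fin.insertNth b p11 dB) :=
    hB.monotone_insertNth hdB hdB01 hp11 (fun j => (vl_mem_Icc hord hω01B j).2) hab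
  exact payoff_le_one_add_payoff hβ (hω01 _) (hω01 0).1 hA0 hSA hSB hB1

section realizations

variable {k : ℕ}

lemma countTrue_cons (b : Bool) (l : Fin k → Bool) :
    countTrue (Fin.cons b l : Fin (k + 1) → Bool) = countTrue l + b.toNat := by
  simp only [countTrue, Finset.card_filter, Fin.sum_univ_succ, Fin.cons_zero, Fin.cons_succ]
  cases b <;> simp [add_comm]

lemma countTrue_snoc (b : Bool) (l : Fin k → Bool) :
    countTrue (Fin.snoc l b : Fin (k + 1) → Bool) = countTrue l + b.toNat := by
  simp only [countTrue, Finset.card_filter, Fin.sum_univ_castSucc, Fin.snoc_castSucc, Fin.snoc_last]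
  cases b <;> simp

lemma countTrue_le (l : Fin k → Bool) : countTrue l ≤ k :=
  (Finset.card_filter_le _ _).trans_eq (Finset.card_fin k)

lemma qProb_cons (u : Fin (k + 1) → ℝ) (b : Bool) (l : Fin k → Bool) :
    qProb u (Fin.cons b l) = (if b then u 0 else 1 - u 0) * qProb (Fin.tail u) l := by
  simp only [qProb, Fin.prod_univ_succ, Fin.cons_zero, Fin.cons_succ, Fin.tail]

lemma qProb_snoc (u : Fin (k + 1) → ℝ) (b : Bool) (l : Fin k → Bool) :
    qProb u (Fin.snoc l b) = (if b then u (Fin.last k) else 1 - u (Fin.last k))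
      * qProb (Fin.init u) l := by
  simp only [qProb, Fin.prod_univ_castSucc, Fin.snoc_castSucc, Fin.snoc_last, Fin.init]
  ring

lemma qProb_nonneg {u : Fin k → ℝ} (hu : ∀ i, u i ∈ Icc (0:ℝ) 1) (l : Fin k → Bool) :
    0 ≤ qProb u l :=
  Finset.prod_nonneg fun i _ => by
    split_ifs
    · exact (hu i).1
    · exact sub_nonneg.2 (hu i).2

lemma sum_qProb (u : Fin k → ℝ) : ∑ l, qProb u l = 1 := by
  calc ∑ l, qProb u l = ∏ i, ∑ b : Bool, (if b then u i else 1 - u i) :=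
        (Fintype.prod_sum fun i (b : Bool) => if b then u i else 1 - u i).symm
    _ = 1 := by simp

lemma sum_add_mul_sum_qProb_cons (u : Fin (k + 1) → ℝ) (β : ℝ) (G : ℕ → ℝ) :
    ∑ i, u i + β * ∑ l, qProb u l * G (countTrue l)
      = ∑ i, Fin.tail u i + ∑ l, qProb (Fin.tail u) l
          * (u 0 + β * (u 0 * G (countTrue l + 1) + (1 - u 0) * G (countTrue l))) := by
  rw [Fin.sum_univ_succ, ← Fintype.sum_equiv (Fin.consEquiv fun _ => Bool)
    (fun p => qProb u (Fin.cons p.1 p.2) * G (countTrue (Fin.cons p.1 p.2 : Fin (k + 1) → Bool)))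
    _
    (fun _ => rfl), Fintype.sum_prod_type, Fintype.sum_bool]
  simp only [qProb_cons, countTrue_cons, if_true, Bool.toNat_true, Bool.toNat_false, add_zero,
    Bool.false_eq_true, if_false]
  have hsplit : ∀ l, qProb (Fin.tail u) l
      * (u 0 + β * (u 0 * G (countTrue l + 1) + (1 - u 0) * G (countTrue l)))
      = qProb (Fin.tail u) l * u 0 + β * (u 0 * qProb (Fin.tail u) l * G (countTrue l + 1)
        + (1 - u 0) * qProb (Fin.tail u) l * G (countTrue l)) := fun l => by ring
  simp only [hsplit, Finset.sum_add_distrib, ← Finset.sum_mul, sum_qProb, ← Finset.mul_sum,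
    Fin.tail]
  ring

lemma sum_add_mul_sum_qProb_snoc (u : Fin (k + 1) → ℝ) (β : ℝ) (G : ℕ → ℝ) :
    ∑ i, u i + β * ∑ l, qProb u l * G (countTrue l)
      = ∑ i, Fin.init u i + ∑ l, qProb (Fin.init u) l * (u (Fin.last k) + β
          * (u (Fin.last k) * G (countTrue l + 1) + (1 - u (Fin.last k)) * G (countTrue l))) := by
  rw [Fin.sum_univ_castSucc, ← Fintype.sum_equiv (Fin.snocEquiv fun _ => Bool)
    (fun p => qProb u (Fin.snoc p.2 p.1) * G (countTrue (Fin.snoc p.2 p.1 : Fin (k + 1) → Bool)))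
    _
    (fun _ => rfl), Fintype.sum_prod_type, Fintype.sum_bool]
  simp only [qProb_snoc, countTrue_snoc, if_true, Bool.toNat_true, Bool.toNat_false, add_zero,
    Bool.false_eq_true, if_false]
  have hsplit : ∀ l, qProb (Fin.init u) l * (u (Fin.last k)
      + β * (u (Fin.last k) * G (countTrue l + 1) + (1 - u (Fin.last k)) * G (countTrue l)))
      = qProb (Fin.init u) l * u (Fin.last k)
        + β * (u (Fin.last k) * qProb (Fin.init u) l * G (countTrue l + 1)
          + (1 - u (Fin.last k)) * qProb (Fin.init u) l * G (countTrue l)) := fun l => by ring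
  simp only [hsplit, Finset.sum_add_distrib, ← Finset.sum_mul, sum_qProb, ← Finset.mul_sum,
    Fin.init]
  ring

end realizations

section topCoords

variable {n k : ℕ}

lemma sum_ite_le_eq_sum_topCoords (hk : k ≤ n) (ω : Fin n → ℝ) :
    ∑ i : Fin n, (if n - k ≤ i.val then ω i else 0) = ∑ i, topCoords hk ω i := by
  rw [← Finset.sum_filter]
  symm
  refine Finset.sum_bij (fun i _ => ⟨n - k + i, by omega⟩) (fun i _ => by simp; omega) ?_ ?_
    (fun _ _ => rfl)
  · intro a _ b _ h
    simp only [Fin.mk.injEq] at h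
    exact Fin.ext (by omega)
  · intro j hj
    simp only [Finset.mem_filter, Finset.mem_univ, true_and] at hj
    exact ⟨⟨j - (n - k), by omega⟩, Finset.mem_univ _, Fin.ext (by simp; omega)⟩

variable (hk : k + 1 ≤ n + 1) (ω : Fin (n + 1) → ℝ)

lemma topCoords_zero : topCoords hk ω 0 = ω ⟨n - k, by omega⟩ := by
  simp only [topCoords]
  congr 1
  ext
  simp

lemma topCoords_cyc_last : topCoords hk (cyc n.succ_pos ω) (Fin.last k) = ω 0 := by
  simp only [topCoords, cyc]
  congr 1
  ext
  simp only [Fin.val_last, Fin.val_zero]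
  rw [show n + 1 - (k + 1) + k + 1 = n + 1 by omega, Nat.mod_self]

lemma init_topCoords_cyc :
    Fin.init (topCoords hk (cyc n.succ_pos ω)) = Fin.tail (topCoords hk ω) := by
  ext i
  simp only [Fin.init, Fin.tail, topCoords, cyc]
  congr 1
  ext
  simp only [Fin.val_castSucc, Fin.val_succ]
  exact Nat.mod_eq_of_lt (by omega)

end topCoords

/-- induction step for inequality (A) of Lemma 3.  If `g` is
affine in each coordinate and satisfies (A) and (B), then the one-step backward
recursion `f` satisfies (A):
`1 + f(ω_2,…,ω_n,ω_1) ≥ f(ω_1,…,ω_n)` for all sorted `ω ∈ [0,1]^n`. -/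
theorem induction_step_A
    (n k : ℕ) (hk1 : 1 ≤ k) (hkn : k ≤ n)
    (p01 p11 β : ℝ)
    (hp01 : p01 ∈ Set.Icc (0:ℝ) 1) (hp11 : p11 ∈ Set.Icc (0:ℝ) 1)
    (hβ : β ∈ Set.Icc (0:ℝ) 1) (hord : p01 ≤ p11)
    (g : (Fin n → ℝ) → ℝ)
    (haffine : ∀ ω : Fin n → ℝ, (∀ j, ω j ∈ Set.Icc (0:ℝ) 1) → ∀ i : Fin n,
      ∀ x ∈ Set.Icc (0:ℝ) 1,
        g (Function.update ω i x) =
          (1 - x) * g (Function.update ω i 0) + x * g (Function.update ω i 1))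
    (hA : ∀ ω : Fin n → ℝ, Monotone ω → (∀ i, ω i ∈ Set.Icc (0:ℝ) 1) →
      1 + g (cyc (by omega) ω) ≥ g ω)
    (hB : ∀ ω : Fin n → ℝ, Monotone ω → (∀ i, ω i ∈ Set.Icc (0:ℝ) 1) →
      ∀ (j : ℕ) (hj : j + 1 < n), ∀ x y : ℝ,
        x ∈ Set.Icc (0:ℝ) 1 → y ∈ Set.Icc (0:ℝ) 1 → y ≤ x →
          g (upd2 ω j hj y x) ≥ g (upd2 ω j hj x y))
    (f : (Fin n → ℝ) → ℝ)
    (hf : ∀ ω : Fin n → ℝ,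
      f ω = (∑ i : Fin n, if n - k ≤ i.val then ω i else 0) +
        β * ∑ l : Fin k → Bool,
          qProb (topCoords hkn ω) l * g (vl k p01 p11 ω (countTrue l))) :
    ∀ ω : Fin n → ℝ, Monotone ω → (∀ i, ω i ∈ Set.Icc (0:ℝ) 1) →
      1 + f (cyc (by omega) ω) ≥ f ω := by
  intro ω hω hω01
  obtain ⟨n, rfl⟩ : ∃ n', n = n' + 1 := ⟨n - 1, by omega⟩
  obtain ⟨k, rfl⟩ : ∃ k', k = k' + 1 := ⟨k - 1, by omega⟩
  have hstep := fun l : Fin k → Bool => step_le_one_add_step_cyc (countTrue_le l) (by omega)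
    hp01 hp11 hβ hord haffine hA hB hω hω01
  have hq := qProb_nonneg (u := Fin.tail (topCoords hkn ω)) fun _ => hω01 _
  rw [hf, hf, sum_ite_le_eq_sum_topCoords hkn, sum_ite_le_eq_sum_topCoords hkn,
    sum_add_mul_sum_qProb_cons _ _ fun c => g (vl (k + 1) p01 p11 ω c),
    sum_add_mul_sum_qProb_snoc _ _ fun c => g (vl (k + 1) p01 p11 (cyc _ ω) c),
    init_topCoords_cyc, topCoords_zero, topCoords_cyc_last]
  have hsum := Finset.sum_le_sum fun l (_ : l ∈ Finset.univ) =>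
    mul_le_mul_of_nonneg_left (hstep l) (hq l)
  simp only [mul_add (qProb _ _) 1, mul_one, Finset.sum_add_distrib, sum_qProb] at hsum
  linarith
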